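/- arXiv:2302.01877 — 2 statements merged into one kernel-verified Lean document; each statement's English description precedes it below -/
import Mathlib

section
/- Let p and q be probability densities on ℝ^n with p ≪ q, and let y be a label with likelihood ℓ(y|x) bounded in (0, ∞). Define the tilted densities p_y(x) ∝ p(x)ℓ(y|x) and q_y(x) ∝ q(x)ℓ(y|x). If sup_x ℓ(y|x) / inf_x ℓ(y|x) ≤ C, then the total variation distance satisfies TV(p_y, q_y) ≤ C² · TV(p, q). -/
open MeasureTheory

private lemma half_abs_13 {n : ℕ} {f : (Fin n → ℝ) → ℝ} (hf : Integrable f)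
    (h0 : ∫ x, f x = 0) : (1/2) * ∫ x, |f x| = ∫ x, max (f x) 0 := by
  have key : ∫ x, |f x| = ∫ x, (2 * max (f x) 0 - f x) := by
    apply integral_congr_ae
    filter_upwards with x
    rcases le_total (f x) 0 with h | h
    · rw [abs_of_nonpos h, max_eq_right h]; ring
    · rw [abs_of_nonneg h, max_eq_left h]; ring
  rw [key, integral_sub (hf.pos_part.const_mul 2) hf, integral_const_mul, h0]
  ring

private lemma aux_13 {n : ℕ} (p q : (Fin n → ℝ) → ℝ) (ℓ : (Fin n → ℝ) → ℝ) (C : ℝ)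
    (hp_nonneg : ∀ x, 0 ≤ p x) (hq_nonneg : ∀ x, 0 ≤ q x)
    (hp_int : Integrable p) (hq_int : Integrable q)
    (hp_norm : ∫ x, p x = 1) (hq_norm : ∫ x, q x = 1)
    (hℓ_pos : ∀ x, 0 < ℓ x)
    (hℓ_ratio : ∀ x x', ℓ x ≤ C * ℓ x')
    (hpℓ_int : Integrable (fun x => p x * ℓ x))
    (hqℓ_int : Integrable (fun x => q x * ℓ x))
    (py qy : (Fin n → ℝ) → ℝ)
    (hpy : ∀ x, py x = p x * ℓ x / ∫ z, p z * ℓ z)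
    (hqy : ∀ x, qy x = q x * ℓ x / ∫ z, q z * ℓ z)
    (hZ : (∫ z, q z * ℓ z) ≤ ∫ z, p z * ℓ z) :
    (1/2) * ∫ x, |py x - qy x| ≤ C ^ 2 * ((1/2) * ∫ x, |p x - q x|) := by
  set Zp : ℝ := ∫ z, p z * ℓ z with hZp_def
  set Zq : ℝ := ∫ z, q z * ℓ z with hZq_def
  set x0 : Fin n → ℝ := fun _ => 0 with hx0
  set m : ℝ := ℓ x0 with hm_def
  have hm : 0 < m := hℓ_pos x0
  have hC1 : 1 ≤ C := by
    have := hℓ_ratio x0 x0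
    nlinarith
  have hC0 : 0 < C := lt_of_lt_of_le one_pos hC1
  have hlow : ∀ x, m / C ≤ ℓ x := by
    intro x
    rw [div_le_iff₀ hC0]
    have := hℓ_ratio x0 x
    linarith
  have hup : ∀ x, ℓ x ≤ C * m := fun x => hℓ_ratio x x0
  -- lower bound on Zp, Zq
  have hZlb : ∀ (r : (Fin n → ℝ) → ℝ), (∀ x, 0 ≤ r x) → Integrable r →
      (∫ x, r x) = 1 → Integrable (fun x => r x * ℓ x) → m / C ≤ ∫ z, r z * ℓ z := by
    intro r hr hri hrn hrli
    have : (∫ x, (m / C) * r x) ≤ ∫ x, r x * ℓ x := by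
      apply integral_mono (hri.const_mul _) hrli
      intro x
      calc m / C * r x = r x * (m / C) := by ring
        _ ≤ r x * ℓ x := mul_le_mul_of_nonneg_left (hlow x) (hr x)
    rwa [integral_const_mul, hrn, mul_one] at this
  have hZp : m / C ≤ Zp := hZlb p hp_nonneg hp_int hp_norm hpℓ_int
  have hZq : m / C ≤ Zq := hZlb q hq_nonneg hq_int hq_norm hqℓ_int
  have hmC : 0 < m / C := div_pos hm hC0
  have hZp_pos : 0 < Zp := lt_of_lt_of_le hmC hZp
  have hZq_pos : 0 < Zq := lt_of_lt_of_le hmC hZq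
  have hpyf : py = fun x => p x * ℓ x / Zp := funext hpy
  have hqyf : qy = fun x => q x * ℓ x / Zq := funext hqy
  have hpy_int : Integrable py := by rw [hpyf]; exact hpℓ_int.div_const Zp
  have hqy_int : Integrable qy := by rw [hqyf]; exact hqℓ_int.div_const Zq
  have hpy_norm : ∫ x, py x = 1 := by
    rw [hpyf]; rw [integral_div]; exact div_self hZp_pos.ne'
  have hqy_norm : ∫ x, qy x = 1 := by
    rw [hqyf]; rw [integral_div]; exact div_self hZq_pos.ne'
  have hfy_int : Integrable (fun x => py x - qy x) := hpy_int.sub hqy_int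
  have hfy0 : ∫ x, (py x - qy x) = 0 := by
    rw [integral_sub hpy_int hqy_int, hpy_norm, hqy_norm]; ring
  have hf_int : Integrable (fun x => p x - q x) := hp_int.sub hq_int
  have hf0 : ∫ x, (p x - q x) = 0 := by
    rw [integral_sub hp_int hq_int, hp_norm, hq_norm]; ring
  rw [half_abs_13 hfy_int hfy0, half_abs_13 hf_int hf0]
  have hratio : ∀ x, ℓ x / Zp ≤ C ^ 2 := by
    intro x
    rw [div_le_iff₀ hZp_pos]
    have h1 : C ^ 2 * (m / C) ≤ C ^ 2 * Zp := mul_le_mul_of_nonneg_left hZp (sq_nonneg C)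
    have h2 : C ^ 2 * (m / C) = C * m := by field_simp
    have := hup x
    linarith
  have hpoint : ∀ x, max (py x - qy x) 0 ≤ C ^ 2 * max (p x - q x) 0 := by
    intro x
    have hrhs : 0 ≤ C ^ 2 * max (p x - q x) 0 :=
      mul_nonneg (sq_nonneg C) (le_max_right _ _)
    rcases le_or_gt (py x - qy x) 0 with h | h
    · rw [max_eq_right h]; exact hrhs
    · rw [max_eq_left h.le]
      have hqq : q x * ℓ x / Zp ≤ q x * ℓ x / Zq := by
        gcongr
        exact mul_nonneg (hq_nonneg x) (hℓ_pos x).le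
      have hkey : py x - qy x ≤ (p x - q x) * ℓ x / Zp := by
        rw [hpy, hqy]
        have : (p x - q x) * ℓ x / Zp = p x * ℓ x / Zp - q x * ℓ x / Zp := by ring
        rw [this]
        linarith
      rcases le_or_gt (p x - q x) 0 with hpq | hpq
      · exfalso
        have : (p x - q x) * ℓ x / Zp ≤ 0 :=
          div_nonpos_of_nonpos_of_nonneg
            (mul_nonpos_of_nonpos_of_nonneg hpq (hℓ_pos x).le) hZp_pos.le
        linarith
      · rw [max_eq_left hpq.le]
        calc py x - qy x ≤ (p x - q x) * ℓ x / Zp := hkey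
          _ = (p x - q x) * (ℓ x / Zp) := by ring
          _ ≤ (p x - q x) * C ^ 2 :=
              mul_le_mul_of_nonneg_left (hratio x) hpq.le
          _ = C ^ 2 * (p x - q x) := by ring
  calc ∫ x, max (py x - qy x) 0
      ≤ ∫ x, C ^ 2 * max (p x - q x) 0 :=
        integral_mono hfy_int.pos_part (hf_int.pos_part.const_mul _) hpoint
    _ = C ^ 2 * ∫ x, max (p x - q x) 0 := integral_const_mul _ _

/-- Let `p, q` be probability densities on `ℝ^n` and `ℓ(y|·)` a likelihood
bounded in `(0,∞)` with `sup ℓ / inf ℓ ≤ C` (expressed as `ℓ x ≤ C * ℓ x'` for all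
`x, x'`). Then the classifier-tilted densities `p_y ∝ p·ℓ`, `q_y ∝ q·ℓ` satisfy
`TV(p_y, q_y) ≤ C² · TV(p, q)`. -/
theorem stmt_13 {n : ℕ} (p q : (Fin n → ℝ) → ℝ) (ℓ : (Fin n → ℝ) → ℝ) (C : ℝ)
    (hp_nonneg : ∀ x, 0 ≤ p x) (hq_nonneg : ∀ x, 0 ≤ q x)
    (hp_int : Integrable p) (hq_int : Integrable q)
    (hp_norm : ∫ x, p x = 1) (hq_norm : ∫ x, q x = 1)
    (hℓ_pos : ∀ x, 0 < ℓ x)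
    (hℓ_ratio : ∀ x x', ℓ x ≤ C * ℓ x')
    (hpℓ_int : Integrable (fun x => p x * ℓ x))
    (hqℓ_int : Integrable (fun x => q x * ℓ x))
    (py qy : (Fin n → ℝ) → ℝ)
    (hpy : ∀ x, py x = p x * ℓ x / ∫ z, p z * ℓ z)
    (hqy : ∀ x, qy x = q x * ℓ x / ∫ z, q z * ℓ z) :
    (1/2) * ∫ x, |py x - qy x| ≤ C ^ 2 * ((1/2) * ∫ x, |p x - q x|) := by
  rcases le_or_gt (∫ z, q z * ℓ z) (∫ z, p z * ℓ z) with h | h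
  · exact aux_13 p q ℓ C hp_nonneg hq_nonneg hp_int hq_int hp_norm hq_norm hℓ_pos
      hℓ_ratio hpℓ_int hqℓ_int py qy hpy hqy h
  · have key := aux_13 q p ℓ C hq_nonneg hp_nonneg hq_int hp_int hq_norm hp_norm hℓ_pos
      hℓ_ratio hqℓ_int hpℓ_int qy py hqy hpy h.le
    have e1 : ∫ x, |py x - qy x| = ∫ x, |qy x - py x| :=
      integral_congr_ae (Filter.Eventually.of_forall fun x => abs_sub_comm _ _)
    have e2 : ∫ x, |p x - q x| = ∫ x, |q x - p x| :=
      integral_congr_ae (Filter.Eventually.of_forall fun x => abs_sub_comm _ _)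
    rw [e1, e2]
    exact key
end

section
/- Let Z = ∫ N(μ,Σ)(x) exp(f(μ) + (x-μ)ᵀ∇f(μ)) dx be the normalizing constant of the first-order tilted Gaussian with g = ∇f(μ). If |f(x) - f(μ) - (x-μ)ᵀ g| ≤ (M/2)‖x-μ‖² for all x, then the true normalizing constant Z* = ∫ N(μ,Σ)(x) exp(f(x)) dx satisfies Z · E[exp(-(M/2)‖X-μ‖²)] ≤ Z* ≤ Z · E[exp((M/2)‖X-μ‖²)] where X ~ tilted Gaussian N(μ+Σg, Σ), provided M‖Σ‖ < 1 so the upper expectation is finite. -/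
open Matrix MeasureTheory

/-- Multivariate Gaussian density `N(μ, S)` on `ℝ^n`. -/
noncomputable def gaussPdf {n : ℕ} (S : Matrix (Fin n) (Fin n) ℝ)
    (μ x : Fin n → ℝ) : ℝ :=
  (2 * Real.pi) ^ (-(n : ℝ) / 2) * S.det ^ (-(1 : ℝ) / 2) *
    Real.exp (-(1/2) * ((x - μ) ⬝ᵥ (S⁻¹ *ᵥ (x - μ))))

/-!
Exponential tilting, `N(μ, Σ)(x) exp ((x - μ)ᵀ g) = exp (gᵀ Σ g / 2) N(μ + Σ g, Σ)(x)`, gives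
`Z = exp (f μ + gᵀ Σ g / 2)` and `Z* = Z ∫ N(μ + Σ g, Σ)(x) exp (R x) dx`, where `R` is the
first-order Taylor remainder of `f` at `μ`. The bound `|R x| ≤ (M/2) ‖x - μ‖²` and monotonicity of
the integral then give the sandwich. The analytic content is the integrability of
`exp ((M/2) ‖x - μ‖²)` against `N(m, Σ)`: substituting `x = m + Σ^{1/2} y` turns the density into
the standard one, and `‖Σ^{1/2} y‖² ≤ ‖Σ‖ ‖y‖²` dominates the integrand by
`exp (-(1 - M ‖Σ‖) ‖y‖² / 2)`, once the shift `m - μ` is absorbed by Young's inequality.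
-/

section ChangeOfVariables

variable {ι E : Type*} [Fintype ι] [DecidableEq ι] [NormedAddCommGroup E] {A : Matrix ι ι ℝ}

lemma measurableEmbedding_add_mulVec (hA : IsUnit A.det) (m : ι → ℝ) :
    MeasurableEmbedding fun y => m + A *ᵥ y := by
  let e := (Matrix.toLinearEquiv' A (A.invertibleOfIsUnitDet hA)).toContinuousLinearEquiv
  exact (Homeomorph.addLeft m).measurableEmbedding.comp e.toHomeomorph.measurableEmbedding

lemma map_add_mulVec_volume (hA : IsUnit A.det) (m : ι → ℝ) :
    Measure.map (fun y => m + A *ᵥ y) volume = ENNReal.ofReal |A.det|⁻¹ • volume := by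
  have hcomp : (fun y => m + A *ᵥ y) = (m + ·) ∘ Matrix.toLin' A := rfl
  rw [hcomp, ← Measure.map_map (measurable_const_add m)
      (Matrix.toLin' A).continuous_of_finiteDimensional.measurable,
    Measure.map_linearMap_addHaar_pi_eq_smul_addHaar
      (by rwa [LinearMap.det_toLin', ← isUnit_iff_ne_zero]),
    Measure.map_smul, map_add_left_eq_self, LinearMap.det_toLin', abs_inv]

lemma integral_comp_add_mulVec [NormedSpace ℝ E] (hA : IsUnit A.det) (m : ι → ℝ)
    (F : (ι → ℝ) → E) :
    ∫ y, F (m + A *ᵥ y) = |A.det|⁻¹ • ∫ x, F x := by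
  rw [← (measurableEmbedding_add_mulVec hA m).integral_map, map_add_mulVec_volume hA m,
    integral_smul_measure, ENNReal.toReal_ofReal (by positivity)]

lemma integrable_comp_add_mulVec_iff (hA : IsUnit A.det) (m : ι → ℝ) {F : (ι → ℝ) → E} :
    Integrable (fun y => F (m + A *ᵥ y)) ↔ Integrable F := by
  rw [← Function.comp_def, ← (measurableEmbedding_add_mulVec hA m).integrable_map_iff,
    map_add_mulVec_volume hA m, integrable_smul_measure (by simpa using hA.ne_zero) (by simp)]

end ChangeOfVariables

section StandardGaussian

variable {ι : Type*} [Fintype ι]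

lemma exp_neg_mul_dotProduct_self_eq_prod (c : ℝ) (y : ι → ℝ) :
    Real.exp (-c * (y ⬝ᵥ y)) = ∏ i, Real.exp (-c * y i ^ 2) := by
  simp only [← Real.exp_sum, dotProduct, Finset.mul_sum, sq]

lemma integrable_exp_neg_mul_dotProduct_self {c : ℝ} (hc : 0 < c) :
    Integrable fun y : ι → ℝ => Real.exp (-c * (y ⬝ᵥ y)) := by
  simp_rw [exp_neg_mul_dotProduct_self_eq_prod]
  exact Integrable.fintype_prod fun _ => integrable_exp_neg_mul_sq hc

lemma integral_exp_neg_mul_dotProduct_self (c : ℝ) :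
    ∫ y : ι → ℝ, Real.exp (-c * (y ⬝ᵥ y)) = Real.sqrt (Real.pi / c) ^ Fintype.card ι := by
  simp_rw [exp_neg_mul_dotProduct_self_eq_prod]
  rw [integral_fintype_prod_volume_eq_pow (fun t => Real.exp (-c * t ^ 2)), integral_gaussian]

end StandardGaussian

section QuadraticForm

variable {ι : Type*} [Fintype ι]

lemma dotProduct_mulVec_le_opNorm_mul [DecidableEq ι] (S : Matrix ι ι ℝ) (y : ι → ℝ) :
    y ⬝ᵥ (S *ᵥ y) ≤ ‖Matrix.toEuclideanCLM (𝕜 := ℝ) S‖ * (y ⬝ᵥ y) := by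
  set T := Matrix.toEuclideanCLM (𝕜 := ℝ) S
  set v : EuclideanSpace ℝ ι := WithLp.toLp 2 y
  have hquad : y ⬝ᵥ (S *ᵥ y) = inner ℝ v (T v) := by
    simp [T, v, EuclideanSpace.inner_eq_star_dotProduct, dotProduct_comm]
  have hnorm : y ⬝ᵥ y = ‖v‖ * ‖v‖ := by
    rw [← real_inner_self_eq_norm_mul_norm, EuclideanSpace.inner_eq_star_dotProduct]; simp [v]
  calc y ⬝ᵥ (S *ᵥ y) = inner ℝ v (T v) := hquad
    _ ≤ ‖v‖ * ‖T v‖ := real_inner_le_norm _ _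
    _ ≤ ‖v‖ * (‖T‖ * ‖v‖) := by gcongr; exact T.le_opNorm v
    _ = ‖T‖ * (y ⬝ᵥ y) := by rw [hnorm]; ring

lemma dotProduct_add_self_le (a b : ι → ℝ) {t : ℝ} (ht : 0 < t) :
    (a + b) ⬝ᵥ (a + b) ≤ (1 + t) * (a ⬝ᵥ a) + (1 + t⁻¹) * (b ⬝ᵥ b) := by
  simp only [dotProduct, Finset.mul_sum, ← Finset.sum_add_distrib]
  refine Finset.sum_le_sum fun i _ => ?_
  have hamgm : 2 * (a i * b i) ≤ t * (a i * a i) + t⁻¹ * (b i * b i) := by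
    have := sq_nonneg (t * a i - b i)
    have ht' : t * t⁻¹ = 1 := mul_inv_cancel₀ ht.ne'
    nlinarith [inv_pos.2 ht]
  simp only [Pi.add_apply]
  nlinarith [hamgm]

end QuadraticForm

section SquareRoot

variable {ι : Type*} [Fintype ι] {A S : Matrix ι ι ℝ}

open scoped MatrixOrder in
lemma Matrix.PosSemidef.exists_isSymm_mul_self_eq [DecidableEq ι] (hS : S.PosSemidef) :
    ∃ A : Matrix ι ι ℝ, A.IsSymm ∧ A * A = S :=
  ⟨CFC.sqrt S, by simpa using (CFC.sqrt_nonneg S).posSemidef.isHermitian,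
    CFC.sqrt_mul_sqrt_self S hS.nonneg⟩

lemma abs_det_eq_sqrt_det_of_mul_self_eq [DecidableEq ι] (hAS : A * A = S) :
    |A.det| = Real.sqrt S.det := by
  rw [← hAS, det_mul, Real.sqrt_mul_self_eq_abs]

lemma isUnit_det_of_mul_self_eq [DecidableEq ι] (hAS : A * A = S) (hS : IsUnit S.det) :
    IsUnit A.det := by
  rw [← hAS, det_mul, IsUnit.mul_iff] at hS
  exact hS.1

lemma Matrix.IsSymm.mulVec_dotProduct (hA : A.IsSymm) (v w : ι → ℝ) :
    (A *ᵥ v) ⬝ᵥ w = v ⬝ᵥ (A *ᵥ w) := by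
  rw [dotProduct_comm, dotProduct_mulVec, ← mulVec_transpose, hA.eq, dotProduct_comm]

lemma Matrix.IsSymm.mulVec_dotProduct_mulVec (hA : A.IsSymm) (hAS : A * A = S) (y : ι → ℝ) :
    (A *ᵥ y) ⬝ᵥ (A *ᵥ y) = y ⬝ᵥ (S *ᵥ y) := by
  rw [hA.mulVec_dotProduct, mulVec_mulVec, hAS]

lemma Matrix.IsSymm.mulVec_dotProduct_inv_mulVec [DecidableEq ι] (hA : A.IsSymm)
    (hAS : A * A = S) (hS : IsUnit S.det) (y : ι → ℝ) : (A *ᵥ y) ⬝ᵥ (S⁻¹ *ᵥ (A *ᵥ y)) = y ⬝ᵥ y := by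
  have hAdet := isUnit_det_of_mul_self_eq hAS hS
  have hAinv : A * S⁻¹ * A = 1 := by
    rw [← hAS, Matrix.mul_inv_rev, ← Matrix.mul_assoc, mul_nonsing_inv _ hAdet, Matrix.one_mul,
      nonsing_inv_mul _ hAdet]
  rw [hA.mulVec_dotProduct, mulVec_mulVec, mulVec_mulVec, hAinv, one_mulVec]

end SquareRoot

section GaussianDensity

variable {n : ℕ} {S : Matrix (Fin n) (Fin n) ℝ}

@[fun_prop]
lemma continuous_gaussPdf (S : Matrix (Fin n) (Fin n) ℝ) (m : Fin n → ℝ) :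
    Continuous (gaussPdf S m) := by
  unfold gaussPdf; fun_prop

lemma gaussPdf_nonneg (hS : 0 ≤ S.det) (m x : Fin n → ℝ) : 0 ≤ gaussPdf S m x := by
  unfold gaussPdf; positivity

lemma gaussPdf_add_mulVec {A : Matrix (Fin n) (Fin n) ℝ} (hA : A.IsSymm) (hAS : A * A = S)
    (hS : IsUnit S.det) (m y : Fin n → ℝ) :
    gaussPdf S m (m + A *ᵥ y) = (2 * Real.pi) ^ (-(n : ℝ) / 2) * S.det ^ (-(1 : ℝ) / 2) *
      Real.exp (-(1 / 2) * (y ⬝ᵥ y)) := by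
  rw [gaussPdf, add_sub_cancel_left, hA.mulVec_dotProduct_inv_mulVec hAS hS]

lemma integrable_gaussPdf (hS : S.PosDef) (m : Fin n → ℝ) : Integrable (gaussPdf S m) := by
  obtain ⟨A, hA, hAS⟩ := hS.posSemidef.exists_isSymm_mul_self_eq
  have hdet : IsUnit S.det := isUnit_iff_ne_zero.2 hS.det_pos.ne'
  have hAdet := isUnit_det_of_mul_self_eq hAS hdet
  rw [← integrable_comp_add_mulVec_iff hAdet m]
  simp_rw [gaussPdf_add_mulVec hA hAS hdet]
  exact (integrable_exp_neg_mul_dotProduct_self one_half_pos).const_mul _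

lemma integral_gaussPdf (hS : S.PosDef) (m : Fin n → ℝ) : ∫ x, gaussPdf S m x = 1 := by
  obtain ⟨A, hA, hAS⟩ := hS.posSemidef.exists_isSymm_mul_self_eq
  have hdet : IsUnit S.det := isUnit_iff_ne_zero.2 hS.det_pos.ne'
  have hAdet := isUnit_det_of_mul_self_eq hAS hdet
  have hsubst := integral_comp_add_mulVec hAdet m (gaussPdf S m)
  simp_rw [gaussPdf_add_mulVec hA hAS hdet] at hsubst
  have h2π : (2 * Real.pi) ^ (-(n : ℝ) / 2) * Real.sqrt (Real.pi / (1 / 2)) ^ n = 1 := by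
    rw [div_div_eq_mul_div, div_one, mul_comm Real.pi, Real.sqrt_eq_rpow,
      ← Real.rpow_mul_natCast (by positivity), ← Real.rpow_add (by positivity)]
    ring_nf; simp
  have hdetS : S.det ^ (-(1 : ℝ) / 2) = (Real.sqrt S.det)⁻¹ := by
    rw [Real.sqrt_eq_rpow, ← Real.rpow_neg hS.det_pos.le]; norm_num
  rw [integral_const_mul, integral_exp_neg_mul_dotProduct_self, Fintype.card_fin,
    abs_det_eq_sqrt_det_of_mul_self_eq hAS, smul_eq_mul, hdetS, mul_right_comm, h2π,
    one_mul, eq_comm, mul_eq_left₀ (inv_ne_zero (Real.sqrt_pos.2 hS.det_pos).ne')] at hsubst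
  exact hsubst

lemma gaussPdf_mul_exp_dotProduct (hS : S.IsSymm) (hdet : IsUnit S.det) (μ g x : Fin n → ℝ) :
    gaussPdf S μ x * Real.exp ((x - μ) ⬝ᵥ g)
      = Real.exp (g ⬝ᵥ (S *ᵥ g) / 2) * gaussPdf S (μ + S *ᵥ g) x := by
  have hSg : S⁻¹ *ᵥ (S *ᵥ g) = g := by
    rw [mulVec_mulVec, nonsing_inv_mul _ hdet, one_mulVec]
  have hcross : (S *ᵥ g) ⬝ᵥ (S⁻¹ *ᵥ (x - μ)) = (x - μ) ⬝ᵥ g := by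
    rw [hS.mulVec_dotProduct, mulVec_mulVec, mul_nonsing_inv _ hdet, one_mulVec, dotProduct_comm]
  have hquad : (x - (μ + S *ᵥ g)) ⬝ᵥ (S⁻¹ *ᵥ (x - (μ + S *ᵥ g)))
      = (x - μ) ⬝ᵥ (S⁻¹ *ᵥ (x - μ)) - 2 * ((x - μ) ⬝ᵥ g) + g ⬝ᵥ (S *ᵥ g) := by
    rw [← sub_sub, mulVec_sub, sub_dotProduct, dotProduct_sub, dotProduct_sub, hSg, hcross,
      dotProduct_comm (S *ᵥ g) g]
    ring
  rw [gaussPdf, gaussPdf, hquad, mul_assoc, ← Real.exp_add, mul_left_comm, ← Real.exp_add]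
  ring_nf

lemma integral_gaussPdf_mul_exp_dotProduct_mul (hS : S.IsSymm) (hdet : IsUnit S.det)
    (μ g : Fin n → ℝ) (φ : (Fin n → ℝ) → ℝ) :
    ∫ x, gaussPdf S μ x * Real.exp ((x - μ) ⬝ᵥ g) * φ x
      = Real.exp (g ⬝ᵥ (S *ᵥ g) / 2) * ∫ x, gaussPdf S (μ + S *ᵥ g) x * φ x := by
  simp_rw [gaussPdf_mul_exp_dotProduct hS hdet, mul_assoc, integral_const_mul]

lemma integral_gaussPdf_mul_exp_dotProduct (hS : S.PosDef) (μ g : Fin n → ℝ) :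
    ∫ x, gaussPdf S μ x * Real.exp ((x - μ) ⬝ᵥ g) = Real.exp (g ⬝ᵥ (S *ᵥ g) / 2) := by
  simpa [integral_gaussPdf hS] using integral_gaussPdf_mul_exp_dotProduct_mul
    (by simpa using hS.isHermitian) (isUnit_iff_ne_zero.2 hS.det_pos.ne') μ g fun _ => 1

lemma integrable_gaussPdf_mul_exp_neg_dotProduct_self_sub (hS : S.PosDef) {M : ℝ} (hM : 0 ≤ M)
    (m μ : Fin n → ℝ) :
    Integrable fun x => gaussPdf S m x * Real.exp (-(M / 2 * ((x - μ) ⬝ᵥ (x - μ)))) := by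
  refine (integrable_gaussPdf hS m).mul_bdd (c := 1) (by fun_prop) (ae_of_all _ fun x => ?_)
  rw [Real.norm_eq_abs, Real.abs_exp, Real.exp_le_one_iff]
  exact neg_nonpos.2 (mul_nonneg (by positivity) (dotProduct_self_star_nonneg _))

lemma integrable_gaussPdf_mul_exp_dotProduct_self_sub_mean (hS : S.PosDef) {M : ℝ} (hM : 0 ≤ M)
    (hMS : M * ‖Matrix.toEuclideanCLM (𝕜 := ℝ) S‖ < 1) (m : Fin n → ℝ) :
    Integrable fun x => gaussPdf S m x * Real.exp (M / 2 * ((x - m) ⬝ᵥ (x - m))) := by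
  obtain ⟨A, hA, hAS⟩ := hS.posSemidef.exists_isSymm_mul_self_eq
  have hdet : IsUnit S.det := isUnit_iff_ne_zero.2 hS.det_pos.ne'
  have hAdet := isUnit_det_of_mul_self_eq hAS hdet
  set C := (2 * Real.pi) ^ (-(n : ℝ) / 2) * S.det ^ (-(1 : ℝ) / 2)
  have hC : 0 ≤ C := by have := hS.det_pos; positivity
  set s := ‖Matrix.toEuclideanCLM (𝕜 := ℝ) S‖
  rw [← integrable_comp_add_mulVec_iff hAdet m]
  simp_rw [gaussPdf_add_mulVec hA hAS hdet, add_sub_cancel_left, hA.mulVec_dotProduct_mulVec hAS]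
  refine ((integrable_exp_neg_mul_dotProduct_self (c := (1 - M * s) / 2) (by linarith)).const_mul
    C).mono' (by fun_prop) (ae_of_all _ fun y => ?_)
  have hquad := mul_le_mul_of_nonneg_left (dotProduct_mulVec_le_opNorm_mul S y)
    (by positivity : 0 ≤ M / 2)
  rw [Real.norm_eq_abs, abs_of_nonneg (by positivity), mul_assoc, ← Real.exp_add]
  gcongr
  linarith

lemma integrable_gaussPdf_mul_exp_dotProduct_self_sub (hS : S.PosDef) {M : ℝ} (hM : 0 ≤ M)
    (hMS : M * ‖Matrix.toEuclideanCLM (𝕜 := ℝ) S‖ < 1) (m μ : Fin n → ℝ) :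
    Integrable fun x => gaussPdf S m x * Real.exp (M / 2 * ((x - μ) ⬝ᵥ (x - μ))) := by
  set s := ‖Matrix.toEuclideanCLM (𝕜 := ℝ) S‖
  have hs : 0 ≤ s := norm_nonneg _
  -- Peter–Paul with weight `t = 1 - M s` trades the shift `m - μ` for the slightly larger
  -- coefficient `M (2 - M s)`, still below `1 / s`.
  set t := 1 - M * s
  have ht : 0 < t := by linarith
  have hM'S : M * (1 + t) * s < 1 := by nlinarith
  have hcentered := (integrable_gaussPdf_mul_exp_dotProduct_self_sub_mean hS
    (by positivity) hM'S m).const_mul (Real.exp (M / 2 * (1 + t⁻¹) * ((m - μ) ⬝ᵥ (m - μ))))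
  refine hcentered.mono' (by fun_prop) (ae_of_all _ fun x => ?_)
  have hsplit := mul_le_mul_of_nonneg_left (dotProduct_add_self_le (x - m) (m - μ) ht)
    (by positivity : 0 ≤ M / 2)
  rw [sub_add_sub_cancel] at hsplit
  rw [Real.norm_eq_abs, abs_of_nonneg (mul_nonneg (gaussPdf_nonneg hS.det_pos.le _ _)
    (Real.exp_nonneg _)), mul_left_comm, ← Real.exp_add]
  gcongr
  · exact gaussPdf_nonneg hS.det_pos.le _ _
  · linarith

end GaussianDensity

lemma integral_mul_exp_bounds_of_abs_le {α : Type*} [MeasurableSpace α] {ν : Measure α}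
    {w R r : α → ℝ} (hw : ∀ x, 0 ≤ w x) (hR : ∀ x, |R x| ≤ r x)
    (hmeas : AEStronglyMeasurable (fun x => w x * Real.exp (R x)) ν)
    (hlower : Integrable (fun x => w x * Real.exp (-r x)) ν)
    (hupper : Integrable (fun x => w x * Real.exp (r x)) ν) :
    ∫ x, w x * Real.exp (-r x) ∂ν ≤ ∫ x, w x * Real.exp (R x) ∂ν ∧
      ∫ x, w x * Real.exp (R x) ∂ν ≤ ∫ x, w x * Real.exp (r x) ∂ν := by
  have hle : ∀ x, w x * Real.exp (R x) ≤ w x * Real.exp (r x) := fun x => by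
    gcongr
    exacts [hw x, (abs_le.1 (hR x)).2]
  have hge : ∀ x, w x * Real.exp (-r x) ≤ w x * Real.exp (R x) := fun x => by
    gcongr
    exacts [hw x, (abs_le.1 (hR x)).1]
  have hint : Integrable (fun x => w x * Real.exp (R x)) ν :=
    hupper.mono' hmeas (ae_of_all _ fun x => by
      rw [Real.norm_eq_abs, abs_of_nonneg (mul_nonneg (hw x) (Real.exp_nonneg _))]
      exact hle x)
  exact ⟨integral_mono hlower hint hge, integral_mono hint hupper hle⟩

theorem stmt_19_general {n : ℕ} (S : Matrix (Fin n) (Fin n) ℝ)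
    (hpd : S.PosDef) (μ g : Fin n → ℝ)
    (f : (Fin n → ℝ) → ℝ) (hf_meas : Measurable f) (M : ℝ) (hM : 0 ≤ M)
    (htaylor : ∀ x : Fin n → ℝ,
      |f x - f μ - (x - μ) ⬝ᵥ g| ≤ M / 2 * ((x - μ) ⬝ᵥ (x - μ)))
    (hMS : M * ‖Matrix.toEuclideanCLM (𝕜 := ℝ) S‖ < 1)
    (Z Zstar : ℝ)
    (hZ : Z = ∫ x : Fin n → ℝ,
      gaussPdf S μ x * Real.exp (f μ + (x - μ) ⬝ᵥ g))
    (hZstar : Zstar = ∫ x : Fin n → ℝ, gaussPdf S μ x * Real.exp (f x)) :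
    Z * (∫ x : Fin n → ℝ, gaussPdf S (μ + S *ᵥ g) x *
          Real.exp (-(M / 2) * ((x - μ) ⬝ᵥ (x - μ)))) ≤ Zstar ∧
    Zstar ≤ Z * (∫ x : Fin n → ℝ, gaussPdf S (μ + S *ᵥ g) x *
          Real.exp (M / 2 * ((x - μ) ⬝ᵥ (x - μ)))) := by
  have hsym : S.IsSymm := by simpa using hpd.isHermitian
  have hdet : IsUnit S.det := isUnit_iff_ne_zero.2 hpd.det_pos.ne'
  have hZ_eq : Z = Real.exp (f μ) * Real.exp (g ⬝ᵥ (S *ᵥ g) / 2) := by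
    simp_rw [hZ, Real.exp_add, mul_left_comm _ (Real.exp (f μ)), integral_const_mul,
      integral_gaussPdf_mul_exp_dotProduct hpd]
  have hZstar_eq : Zstar = Z * ∫ x, gaussPdf S (μ + S *ᵥ g) x *
      Real.exp (f x - f μ - (x - μ) ⬝ᵥ g) := by
    have hsplit : ∀ x, gaussPdf S μ x * Real.exp (f x) = Real.exp (f μ) *
        (gaussPdf S μ x * Real.exp ((x - μ) ⬝ᵥ g) * Real.exp (f x - f μ - (x - μ) ⬝ᵥ g)) := by
      intro x
      rw [mul_left_comm, mul_assoc, ← Real.exp_add, ← Real.exp_add]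
      ring_nf
    simp_rw [hZstar, hsplit, integral_const_mul,
      integral_gaussPdf_mul_exp_dotProduct_mul hsym hdet, hZ_eq, mul_assoc]
  have hZ_nonneg : 0 ≤ Z := hZ_eq ▸ by positivity
  obtain ⟨hlower, hupper⟩ := integral_mul_exp_bounds_of_abs_le
    (gaussPdf_nonneg hpd.det_pos.le (μ + S *ᵥ g)) htaylor (by fun_prop)
    (integrable_gaussPdf_mul_exp_neg_dotProduct_self_sub hpd hM _ μ)
    (integrable_gaussPdf_mul_exp_dotProduct_self_sub hpd hM hMS _ μ)
  rw [hZstar_eq]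
  simp_rw [neg_mul]
  exact ⟨mul_le_mul_of_nonneg_left hlower hZ_nonneg, mul_le_mul_of_nonneg_left hupper hZ_nonneg⟩

/-- Sandwich bound for the true normalizing constant of reward-guided
sampling. With `Z` the normalizing constant of the first-order tilted Gaussian
(tilt `g = ∇f(μ)`) and `Z*` the true one, if the Taylor remainder of `f` is bounded
by `(M/2)‖x-μ‖²` and `M‖Σ‖ < 1` (operator norm, ensuring finiteness of the upper
expectation), then
`Z·E[exp(-(M/2)‖X-μ‖²)] ≤ Z* ≤ Z·E[exp((M/2)‖X-μ‖²)]` with `X ~ N(μ+Σg, Σ)`. -/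
theorem stmt_19 {n : ℕ} (S : Matrix (Fin n) (Fin n) ℝ)
    (hsym : S.IsSymm) (hpd : S.PosDef) (μ g : Fin n → ℝ)
    (f : (Fin n → ℝ) → ℝ) (hf_meas : Measurable f) (M : ℝ) (hM : 0 ≤ M)
    (htaylor : ∀ x : Fin n → ℝ,
      |f x - f μ - (x - μ) ⬝ᵥ g| ≤ M / 2 * ((x - μ) ⬝ᵥ (x - μ)))
    (hMS : M * ‖Matrix.toEuclideanCLM (𝕜 := ℝ) S‖ < 1)
    (Z Zstar : ℝ)
    (hZ : Z = ∫ x : Fin n → ℝ,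
      gaussPdf S μ x * Real.exp (f μ + (x - μ) ⬝ᵥ g))
    (hZstar : Zstar = ∫ x : Fin n → ℝ, gaussPdf S μ x * Real.exp (f x)) :
    Z * (∫ x : Fin n → ℝ, gaussPdf S (μ + S *ᵥ g) x *
          Real.exp (-(M / 2) * ((x - μ) ⬝ᵥ (x - μ)))) ≤ Zstar ∧
    Zstar ≤ Z * (∫ x : Fin n → ℝ, gaussPdf S (μ + S *ᵥ g) x *
          Real.exp (M / 2 * ((x - μ) ⬝ᵥ (x - μ)))) :=
  stmt_19_general S hpd μ g f hf_meas M hM htaylor hMS Z Zstar hZ hZstar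
end
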